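/- arXiv:1404.0331 — 4 statements merged into one kernel-verified Lean document; each statement's English description precedes it below -/
import Mathlib

section
/- Let h₁, …, h_k : ℤ → C[t^{±1}] be functions, each a finite C[t^{±1}]-linear combination of functions n ↦ t^{2jn} for integers j. Then there exists an operator P, a Laurent polynomial in the shift operator L with coefficients in C[t^{±1}], such that P is invariant under the substitution L ↦ L^{−1} combined with reversing the order of factors (σ-invariant), P evaluated at t = −1 equals (L + L^{−1} − 2)^m for some m ≥ 1, and P h_i = 0 for all i = 1, …, k. -/
open LaurentPolynomial

/-- Evaluation of a Laurent polynomial in `t` at `t = -1`. -/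
noncomputable def evalNegOne (p : LaurentPolynomial ℂ) : ℂ :=
  p.coeff.sum fun j a => a * (-1 : ℂ) ^ j

/-- `InSpan f` means `f : ℤ → ℂ[t^{±1}]` is a finite `ℂ[t^{±1}]`-linear combination of the
functions `n ↦ t^{2jn}`, `j ∈ ℤ`. -/
def InSpan (f : ℤ → LaurentPolynomial ℂ) : Prop :=
  ∃ d : ℤ →₀ LaurentPolynomial ℂ, ∀ n : ℤ, f n = d.sum fun j a => a * T (2 * j * n)

/-- The action of a Laurent polynomial `P = Σ_j c_j L^j` in the shift operator `L`
(with coefficients `c_j ∈ ℂ[t^{±1}]`) on functions `ℤ → ℂ[t^{±1}]`. -/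
noncomputable def shiftAct (c : ℤ →₀ LaurentPolynomial ℂ) (h : ℤ → LaurentPolynomial ℂ)
    (n : ℤ) : LaurentPolynomial ℂ :=
  c.sum fun j a => a * h (n + j)

/-!
The operator `L + L⁻¹ - t^j - t^{-j}` kills `n ↦ t^{jn}`, since
`t^{j(n+1)} + t^{j(n-1)} = (t^j + t^{-j}) t^{jn}`. The shift action is an algebra map, so the
product of these factors over all exponents occurring in the `hᵢ` (and `j = 0`, to make `m ≥ 1`)
kills every `hᵢ`. Each factor is fixed by `L ↦ L⁻¹`, and for even `j` it specializes at `t = -1`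
to `L + L⁻¹ - 2`.
-/

open Finset

namespace LaurentPolynomial

section Evaluation

variable {A S : Type*} [CommSemiring A] [CommSemiring S]

theorem eval₂_eq_sum (f : A →+* S) (x : Sˣ) (p : A[T;T⁻¹]) :
    eval₂ f x p = p.coeff.sum fun n a => f a * ↑(x ^ n) := by
  induction p using LaurentPolynomial.induction_on' with
  | add p q hp hq =>
    rw [map_add, hp, hq, AddMonoidAlgebra.coeff_add,
      Finsupp.sum_add_index' (by simp) (by simp [add_mul])]
  | C_mul_T n a =>
    rw [eval₂_C_mul_T, ← single_eq_C_mul_T, AddMonoidAlgebra.coeff_single,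
      Finsupp.sum_single_index (by simp)]

variable (f : A →+* S)

@[simp]
theorem mapRingHom_T (n : ℤ) : AddMonoidAlgebra.mapRingHom ℤ f (T n) = T n := by
  rw [T, AddMonoidAlgebra.mapRingHom_single, map_one]
  rfl

@[simp]
theorem mapRingHom_C (a : A) : AddMonoidAlgebra.mapRingHom ℤ f (C a) = C (f a) := by
  rw [← single_eq_C, AddMonoidAlgebra.mapRingHom_single]
  rfl

end Evaluation

section Shift

variable (A M : Type*) [CommSemiring A] [AddCommMonoid M] [Module A M]

noncomputable def shiftAlgHom : A[T;T⁻¹] →ₐ[A] Module.End A (ℤ → M) :=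
  AddMonoidAlgebra.lift A _ ℤ
    { toFun := fun j => LinearMap.funLeft A M (· + j.toAdd)
      map_one' := by ext; simp
      map_mul' := fun a b => by ext; simp [add_assoc] }

variable {A M}

theorem shiftAlgHom_apply (P : A[T;T⁻¹]) (f : ℤ → M) (n : ℤ) :
    shiftAlgHom A M P f n = P.coeff.sum fun j a => a • f (n + j) := by
  simp [shiftAlgHom, AddMonoidAlgebra.lift_apply, Finsupp.sum,
    Finset.sum_apply, LinearMap.funLeft_apply]

@[simp]
theorem shiftAlgHom_T_apply (j : ℤ) (f : ℤ → M) (n : ℤ) :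
    shiftAlgHom A M (T j) f n = f (n + j) := by
  rw [shiftAlgHom_apply, T, AddMonoidAlgebra.coeff_single,
    Finsupp.sum_single_index (by simp), one_smul]

@[simp]
theorem shiftAlgHom_C_apply (a : A) (f : ℤ → M) (n : ℤ) :
    shiftAlgHom A M (C a) f n = a • f n := by
  rw [← single_eq_C, shiftAlgHom_apply, AddMonoidAlgebra.coeff_single,
    Finsupp.sum_single_index (by simp), add_zero]

end Shift

section ExpAnnihilator

variable {A : Type*} [CommRing A]

/-- The outer variable `T` plays the shift `L`, the inner one the parameter `t`. -/
noncomputable def expAnnihilator (j : ℤ) : LaurentPolynomial A[T;T⁻¹] :=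
  T 1 + T (-1) - C (T j + T (-j))

theorem shiftAlgHom_expAnnihilator (j : ℤ) :
    shiftAlgHom A[T;T⁻¹] A[T;T⁻¹] (expAnnihilator j) (fun n => T (j * n)) = 0 := by
  ext n : 1
  simp only [expAnnihilator, map_sub, map_add, LinearMap.sub_apply, LinearMap.add_apply,
    Pi.sub_apply, Pi.add_apply, shiftAlgHom_T_apply, shiftAlgHom_C_apply, smul_eq_mul,
    Pi.zero_apply]
  rw [mul_add, mul_add, T_add, T_add, mul_one, mul_neg_one]
  ring

theorem invert_expAnnihilator (j : ℤ) :
    invert (expAnnihilator j : LaurentPolynomial A[T;T⁻¹]) = expAnnihilator j := by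
  simp [expAnnihilator, add_comm]

theorem mapRingHom_expAnnihilator_of_even {j : ℤ} (hj : Even j) :
    AddMonoidAlgebra.mapRingHom ℤ (eval₂ (RingHom.id A) (-1)) (expAnnihilator j) =
      T 1 + T (-1) - 2 := by
  rw [expAnnihilator, map_sub, map_add, mapRingHom_T, mapRingHom_T, mapRingHom_C, map_add,
    eval₂_T, eval₂_T, hj.neg_one_zpow, hj.neg.neg_one_zpow,
    Units.val_one, one_add_one_eq_two, map_ofNat]

theorem shiftAlgHom_prod_expAnnihilator {s : Finset ℤ} {f : ℤ → A[T;T⁻¹]}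
    (hf : f ∈ Submodule.span A[T;T⁻¹] ((fun j n => T (j * n)) '' s)) :
    shiftAlgHom A[T;T⁻¹] A[T;T⁻¹] (∏ j ∈ s, expAnnihilator j) f = 0 := by
  classical
  refine (Submodule.span_le (p := LinearMap.ker _)).2 ?_ hf
  rintro _ ⟨j, hj, rfl⟩
  rw [SetLike.mem_coe, LinearMap.mem_ker, ← Finset.prod_erase_mul s _ hj, map_mul,
    Module.End.mul_apply, shiftAlgHom_expAnnihilator, map_zero]

end ExpAnnihilator

end LaurentPolynomial

theorem InSpan.exists_finset_even_mem_span {f : ℤ → LaurentPolynomial ℂ} (hf : InSpan f) :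
    ∃ s : Finset ℤ, (∀ j ∈ s, Even j) ∧
      f ∈ Submodule.span (LaurentPolynomial ℂ) ((fun j n => T (j * n)) '' s) := by
  classical
  obtain ⟨d, hd⟩ := hf
  refine ⟨d.support.image (2 * ·), by simp, ?_⟩
  have hf : f = ∑ j ∈ d.support, d j • fun n => T (2 * j * n) := by
    ext n : 1
    simp [hd, Finsupp.sum]
  rw [hf]
  exact Submodule.sum_mem _ fun j hj =>
    Submodule.smul_mem _ _ (Submodule.subset_span ⟨2 * j, mem_image_of_mem _ hj, rfl⟩)

theorem evalNegOne_eq_eval₂ (p : LaurentPolynomial ℂ) :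
    evalNegOne p = eval₂ (RingHom.id ℂ) (-1) p := by
  simp [evalNegOne, eval₂_eq_sum]

theorem sum_C_evalNegOne_mul_T (P : LaurentPolynomial (LaurentPolynomial ℂ)) :
    (P.coeff.sum fun j a => C (evalNegOne a) * T j) =
      AddMonoidAlgebra.mapRingHom ℤ (eval₂ (RingHom.id ℂ) (-1)) P := by
  conv_rhs => rw [← AddMonoidAlgebra.sum_coeff_single (AddMonoidAlgebra.mapRingHom _ _ P)]
  rw [AddMonoidAlgebra.coe_mapRingHom, AddMonoidAlgebra.coeff_map,
    Finsupp.sum_mapRange_index (by simp)]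
  simp [evalNegOne_eq_eval₂, single_eq_C_mul_T]

theorem shiftAct_coeff (P : LaurentPolynomial (LaurentPolynomial ℂ))
    (h : ℤ → LaurentPolynomial ℂ) (n : ℤ) :
    shiftAct P.coeff h n = shiftAlgHom _ _ P h n := by
  rw [shiftAlgHom_apply]
  rfl

/-- Given functions `h₁, …, h_k : ℤ → ℂ[t^{±1}]`, each a finite `ℂ[t^{±1}]`-linear
combination of `n ↦ t^{2jn}`, there is a Laurent polynomial `P = Σ c_j L^j` in the shift
operator `L` which is σ-invariant (`c_j = c_{-j}`), whose specialization at `t = -1` equals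
`(L + L⁻¹ - 2)^m` for some `m ≥ 1`, and which annihilates every `h_i`. -/
theorem exists_symmetric_annihilator (k : ℕ) (h : Fin k → (ℤ → LaurentPolynomial ℂ))
    (hh : ∀ i, InSpan (h i)) :
    ∃ (c : ℤ →₀ LaurentPolynomial ℂ) (m : ℕ), 1 ≤ m ∧
      (∀ j : ℤ, c j = c (-j)) ∧
      (c.sum fun j a => C (evalNegOne a) * T j) = (T 1 + T (-1) - 2) ^ m ∧
      (∀ i : Fin k, ∀ n : ℤ, shiftAct c (h i) n = 0) := by
  classical
  choose s hs_even hs_span using fun i => (hh i).exists_finset_even_mem_span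
  set S := insert 0 (univ.biUnion s)
  set P : LaurentPolynomial (LaurentPolynomial ℂ) := ∏ j ∈ S, expAnnihilator j
  have hS_even : ∀ j ∈ S, Even j := by
    simp only [S, mem_insert, mem_biUnion, mem_univ, true_and]
    rintro j (rfl | ⟨i, hj⟩)
    exacts [Even.zero, hs_even i j hj]
  have hP_symm : invert P = P := by
    simp only [P, map_prod, invert_expAnnihilator]
  refine ⟨P.coeff, S.card, card_pos.2 (insert_nonempty _ _), fun j => ?_, ?_, fun i n => ?_⟩
  · rw [← invert_apply, hP_symm]
  · rw [sum_C_evalNegOne_mul_T, map_prod,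
      prod_congr rfl fun j hj => mapRingHom_expAnnihilator_of_even (hS_even j hj), prod_const]
  · have hsub : s i ⊆ S := (subset_biUnion_of_mem s (mem_univ i)).trans (subset_insert _ _)
    rw [shiftAct_coeff, shiftAlgHom_prod_expAnnihilator
      (Submodule.span_mono (Set.image_mono (coe_subset.2 hsub)) (hs_span i)), Pi.zero_apply]
end

section
/- Let f : ℤ → C[t^{±1}] and suppose ((L M^{2p} + t^{2p}) f)(n) is, as a function of n, a finite C[t^{±1}]-linear combination of functions n ↦ t^{2jn}. Then for every positive integer m, ((L^m M^{2pm} − (−1)^m t^{2pm²}) f)(n) is also such a finite linear combination. -/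
/-!
The functions `n ↦ t^{2jn}` span a `ℂ[t^{±1}]`-submodule of `ℤ → ℂ[t^{±1}]` that is stable
under the shift `L`, under multiplication by `t^{2an+b}`, and under subtraction. Writing
`R_m = L^m M^{2pm} - (-1)^m t^{2pm²}`, the commutation `L^m M^{2pm} = t^{4pm²} M^{2pm} L^m` gives
`R_{m+1} f (n) = t^{4pmn + 4pm(m+1)} (R_1 f)(n + m) - t^{2p(2m+1)} (R_m f)(n)`,
so induction on `m` starting from `R_1 = L M^{2p} + t^{2p}` proves the claim.
-/

open LaurentPolynomial

noncomputable def evenPowerSpan : Submodule (LaurentPolynomial ℂ) (ℤ → LaurentPolynomial ℂ) :=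
  Submodule.span _ (Set.range fun j n : ℤ => T (2 * j * n))

theorem inSpan_iff_mem_evenPowerSpan {f : ℤ → LaurentPolynomial ℂ} :
    InSpan f ↔ f ∈ evenPowerSpan := by
  rw [evenPowerSpan, Finsupp.mem_span_range_iff_exists_finsupp, InSpan]
  simp only [funext_iff, Finsupp.sum, Finset.sum_apply, Pi.smul_apply, smul_eq_mul, eq_comm]

theorem T_mem_evenPowerSpan (j : ℤ) : (fun n : ℤ => T (2 * j * n)) ∈ evenPowerSpan :=
  Submodule.subset_span ⟨j, rfl⟩

theorem evenPowerSpan_le_comap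
    {φ : (ℤ → LaurentPolynomial ℂ) →ₗ[LaurentPolynomial ℂ] ℤ → LaurentPolynomial ℂ}
    (hφ : ∀ j : ℤ, φ (fun n => T (2 * j * n)) ∈ evenPowerSpan) :
    evenPowerSpan ≤ evenPowerSpan.comap φ :=
  Submodule.span_le.mpr <| Set.range_subset_iff.mpr hφ

theorem comp_add_mem_evenPowerSpan {f : ℤ → LaurentPolynomial ℂ} (hf : f ∈ evenPowerSpan)
    (k : ℤ) : (fun n => f (n + k)) ∈ evenPowerSpan := by
  refine evenPowerSpan_le_comap (φ := LinearMap.funLeft _ _ fun n : ℤ => n + k) (fun j => ?_) hf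
  convert Submodule.smul_mem _ (T (2 * j * k)) (T_mem_evenPowerSpan j) using 1
  funext n
  simp only [LinearMap.funLeft_apply, Pi.smul_apply, smul_eq_mul, ← T_add]
  ring_nf

theorem T_mul_mem_evenPowerSpan {f : ℤ → LaurentPolynomial ℂ} (hf : f ∈ evenPowerSpan)
    (a b : ℤ) : (fun n => T (2 * a * n + b) * f n) ∈ evenPowerSpan := by
  have hmul : (fun n => T (2 * a * n) * f n) ∈ evenPowerSpan := by
    refine evenPowerSpan_le_comap (φ := LinearMap.mulLeft _ fun n : ℤ => T (2 * a * n))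
      (fun j => ?_) hf
    convert T_mem_evenPowerSpan (j + a) using 1
    funext n
    simp only [LinearMap.mulLeft_apply, Pi.mul_apply, ← T_add]
    ring_nf
  convert Submodule.smul_mem _ (T b) hmul using 1
  funext n
  simp only [Pi.smul_apply, smul_eq_mul, T_add]
  ring

noncomputable def powerRecurrence (p : ℤ) (f : ℤ → LaurentPolynomial ℂ) (m : ℕ) (n : ℤ) :
    LaurentPolynomial ℂ :=
  T (4 * p * m * (n + m)) * f (n + m) - (-1) ^ m * T (2 * p * m ^ 2) * f n

theorem powerRecurrence_one (p : ℤ) (f : ℤ → LaurentPolynomial ℂ) (n : ℤ) :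
    powerRecurrence p f 1 n = T (4 * p * (n + 1)) * f (n + 1) + T (2 * p) * f n := by
  simp [powerRecurrence]

theorem powerRecurrence_succ (p : ℤ) (f : ℤ → LaurentPolynomial ℂ) (m : ℕ) (n : ℤ) :
    powerRecurrence p f (m + 1) n =
      T (2 * (2 * p * m) * n + 4 * p * m * (m + 1)) * powerRecurrence p f 1 (n + m) -
        T (2 * p * (2 * m + 1)) * powerRecurrence p f m n := by
  have h₁ : (T (2 * (2 * p * m) * n + 4 * p * m * (m + 1)) * T (4 * p * (n + m + 1)) :
      LaurentPolynomial ℂ) = T (4 * p * (m + 1) * (n + m + 1)) := by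
    rw [← T_add]; ring_nf
  have h₂ : (T (2 * (2 * p * m) * n + 4 * p * m * (m + 1)) * T (2 * p) : LaurentPolynomial ℂ) =
      T (2 * p * (2 * m + 1)) * T (4 * p * m * (n + m)) := by
    rw [← T_add, ← T_add]; ring_nf
  have h₃ : (T (2 * p * (2 * m + 1)) * T (2 * p * m ^ 2) : LaurentPolynomial ℂ) =
      T (2 * p * (m + 1) ^ 2) := by
    rw [← T_add]; ring_nf
  rw [powerRecurrence_one]
  simp only [powerRecurrence]
  push_cast
  linear_combination (norm := ring_nf)
    -f (n + m + 1) * h₁ - f (n + m) * h₂ + (-1) ^ (m + 1) * f n * h₃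

/-- Lemma 4.1: if `(L M^{2p} + t^{2p}) f ∈ R[t^{±2n}]`, i.e. the function
`n ↦ t^{4p(n+1)} f(n+1) + t^{2p} f(n)` is a finite combination of `n ↦ t^{2jn}`, then for every
positive integer `m` so is `(L^m M^{2pm} - (-1)^m t^{2pm²}) f`, i.e. the function
`n ↦ t^{4pm(n+m)} f(n+m) - (-1)^m t^{2pm²} f(n)`. -/
theorem power_recurrence_odd (p : ℤ) (f : ℤ → LaurentPolynomial ℂ)
    (hf : InSpan fun n => T (4 * p * (n + 1)) * f (n + 1) + T (2 * p) * f n) :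
    ∀ m : ℕ, 0 < m →
      InSpan fun n =>
        T (4 * p * (m : ℤ) * (n + (m : ℤ))) * f (n + (m : ℤ)) -
          (-1) ^ m * T (2 * p * (m : ℤ) ^ 2) * f n := by
  have h₁ : powerRecurrence p f 1 ∈ evenPowerSpan := by
    convert inSpan_iff_mem_evenPowerSpan.mp hf using 1
    exact funext (powerRecurrence_one p f)
  intro m hm
  rw [inSpan_iff_mem_evenPowerSpan]
  change powerRecurrence p f m ∈ evenPowerSpan
  induction m, hm using Nat.le_induction with
  | base => exact h₁
  | succ m _ ih =>
    rw [funext (powerRecurrence_succ p f m)]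
    exact Submodule.sub_mem _ (T_mul_mem_evenPowerSpan (comp_add_mem_evenPowerSpan h₁ m) _ _)
      (Submodule.smul_mem _ _ ih)
end

section
/- Let t = C[M^{±1}, L^{±1}], σ the involution with σ(M^k L^l) = M^{−k} L^{−l}, and A ∈ t with σ(A) = η M^a L^b A (η = ±1, a, b ∈ ℤ). Let I ⊆ t^σ be an ideal of the σ-invariant subring containing an element of the form M^{am} L^{bm} A^{2m} for some positive integer m. Then the σ-invariant part (A·t)^σ of the ideal of t generated by A is contained in the radical √I (radical taken in t^σ). -/
open AddMonoidAlgebra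

/-- The two-variable Laurent polynomial ring `ℂ[M^{±1}, L^{±1}]`. -/
noncomputable abbrev LP2 := AddMonoidAlgebra ℂ (ℤ × ℤ)

/-- The monomial `M^k L^l` in `ℂ[M^{±1}, L^{±1}]`. -/
noncomputable def mono (k l : ℤ) : LP2 := AddMonoidAlgebra.single (k, l) 1

/-- The involution `σ` of `ℂ[M^{±1}, L^{±1}]` with `σ(M^k L^l) = M^{-k} L^{-l}`. -/
noncomputable def σ₂ : LP2 ≃ₐ[ℂ] LP2 := AddMonoidAlgebra.domCongr ℂ ℂ (AddEquiv.neg (ℤ × ℤ))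

/-- The σ-invariant subring `t^σ` of `ℂ[M^{±1}, L^{±1}]`. -/
noncomputable def fixedSub : Subalgebra ℂ LP2 where
  carrier := {x | σ₂ x = x}
  mul_mem' := by intro x y hx hy; simp only [Set.mem_setOf_eq, map_mul] at *; rw [hx, hy]
  add_mem' := by intro x y hx hy; simp only [Set.mem_setOf_eq, map_add] at *; rw [hx, hy]
  algebraMap_mem' := by intro c; exact σ₂.commutes c

/-!
An invariant `x = y A` satisfies `x² = x σ(x) = η M^a L^b A² · y σ(y)`, and the cofactor
`y σ(y)` is itself invariant. Raising to the `m`-th power exhibits `x^{2m}` as a multiple, in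
`t^σ`, of the given element `M^{am} L^{bm} A^{2m}` of `I`.
-/

theorem sq_eq_of_map_eq_mul {R F : Type*} [CommSemiring R] [FunLike F R R]
    [RingHomClass F R R] (σ : F) {x y A c : R} (hx : σ x = x) (hxy : y * A = x)
    (hA : σ A = c * A) : x ^ 2 = c * A ^ 2 * (y * σ y) := by
  calc x ^ 2 = (y * A) * σ x := by rw [sq, hx, hxy]
    _ = y * A * (σ y * (c * A)) := by rw [← hxy, map_mul, hA]
    _ = c * A ^ 2 * (y * σ y) := by ring

theorem σ₂_σ₂ (z : LP2) : σ₂ (σ₂ z) = z := by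
  induction z using AddMonoidAlgebra.induction_linear with
  | zero => simp
  | add p q hp hq => simp only [map_add, hp, hq]
  | single p c => simp [σ₂, AddMonoidAlgebra.domCongr_single]

theorem mul_σ₂_mem_fixedSub (y : LP2) : y * σ₂ y ∈ fixedSub := by
  change σ₂ (y * σ₂ y) = y * σ₂ y
  rw [map_mul, σ₂_σ₂, mul_comm]

theorem mono_pow (a b : ℤ) (m : ℕ) : mono a b ^ m = mono (a * m) (b * m) := by
  simp [mono, AddMonoidAlgebra.single_pow, mul_comm]

theorem sigma_part_subset_radical_general (A : LP2) (η : ℂ)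
    (a b : ℤ) (hσA : σ₂ A = η • (mono a b * A))
    (I : Ideal fixedSub)
    (hI : ∃ m : ℕ, 0 < m ∧ ∃ x ∈ I, (x : LP2) = mono (a * m) (b * m) * A ^ (2 * m)) :
    ∀ x : fixedSub, (x : LP2) ∈ Ideal.span {A} → x ∈ I.radical := by
  intro x hx
  obtain ⟨y, hxy⟩ := Ideal.mem_span_singleton'.mp hx
  obtain ⟨m, -, z, hzI, hz⟩ := hI
  let u : fixedSub := η • ⟨y * σ₂ y, mul_σ₂_mem_fixedSub y⟩
  have hsq : (x : LP2) ^ 2 = mono a b * A ^ 2 * u := by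
    rw [sq_eq_of_map_eq_mul σ₂ x.2 hxy (c := η • mono a b) (by rw [hσA, smul_mul_assoc])]
    simp only [u, Subalgebra.coe_smul, smul_mul_assoc, mul_smul_comm]
  have hpow : x ^ (2 * m) = z * u ^ m := Subtype.ext <| by
    rw [MulMemClass.coe_mul, SubmonoidClass.coe_pow, SubmonoidClass.coe_pow, hz, pow_mul, hsq,
      mul_pow, mul_pow, mono_pow, ← pow_mul]
  exact ⟨2 * m, hpow ▸ I.mul_mem_right _ hzI⟩

/-- Lemma 2.2: if `σ(A) = η M^a L^b A` (`η = ±1`) and `I` is an ideal of `t^σ` containing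
an element equal (in `t`) to `M^{am} L^{bm} A^{2m}` for some positive integer `m`, then the
σ-invariant part `(A·t)^σ` of the ideal generated by `A` is contained in `√I`. -/
theorem sigma_part_subset_radical (A : LP2) (hA : A ≠ 0) (η : ℂ) (hη : η = 1 ∨ η = -1)
    (a b : ℤ) (hσA : σ₂ A = η • (mono a b * A))
    (I : Ideal fixedSub)
    (hI : ∃ m : ℕ, 0 < m ∧ ∃ x ∈ I, (x : LP2) = mono (a * m) (b * m) * A ^ (2 * m)) :
    ∀ x : fixedSub, (x : LP2) ∈ Ideal.span {A} → x ∈ I.radical :=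
  sigma_part_subset_radical_general A η a b hσA I hI
end

section
/- In the commutative Laurent polynomial ring C[M^{±1}, L^{±1}], for integers p, q, r, s one has the identity (L²M^{2rs} + L^{−2}M^{−2rs} − 2)(L²M^{2pqs²} + L^{−2}M^{−2pqs²} − 2)(L + L^{−1} − 2) = M^{2(r+pqs)s} L^{−5} ((L−1)(L² − M^{−2pqs²})(L² − M^{−2rs}))². -/
open AddMonoidAlgebra

lemma mono_mul (k l k' l' : ℤ) : mono k l * mono k' l' = mono (k + k') (l + l') := by
  simp [mono, AddMonoidAlgebra.single_mul_single, Prod.mk_add_mk]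

lemma mono_zero : mono 0 0 = 1 := by
  simp [mono, AddMonoidAlgebra.one_def]
  rfl

lemma factor1 (a : ℤ) : mono a 2 + mono (-a) (-2) - 2 = mono (-a) (-2) * (mono a 2 - 1) ^ 2 := by
  have h : mono (-a) (-2) * (mono a 2 - 1) ^ 2 =
      mono (-a) (-2) * (mono a 2 * mono a 2) - 2 * (mono (-a) (-2) * mono a 2) + mono (-a) (-2) := by
    ring
  rw [h, mono_mul, mono_mul, mono_mul]
  simp [mono_zero]
  ring

lemma factor2 (a : ℤ) : mono 0 2 - mono (-a) 0 = mono (-a) 0 * (mono a 2 - 1) := by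
  rw [mul_sub, mono_mul, mul_one]
  simp

lemma key (a b : ℤ) :
    (mono a 2 + mono (-a) (-2) - 2) * (mono b 2 + mono (-b) (-2) - 2) *
      (mono 0 1 + mono 0 (-1) - 2) =
    mono (a + b) (-5) *
      ((mono 0 1 - 1) * (mono 0 2 - mono (-b) 0) * (mono 0 2 - mono (-a) 0)) ^ 2 := by
  rw [factor1 a, factor1 b, factor2 a, factor2 b]
  have h0 : mono 0 1 + mono 0 (-1) - 2 = mono 0 (-1) * (mono 0 1 - 1) ^ 2 := by
    have h : mono 0 (-1) * (mono 0 1 - 1) ^ 2 =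
        mono 0 (-1) * (mono 0 1 * mono 0 1) - 2 * (mono 0 (-1) * mono 0 1) + mono 0 (-1) := by ring
    rw [h, mono_mul, mono_mul, mono_mul]
    simp [mono_zero]
    ring
  rw [h0]
  have lhs : mono (-a) (-2) * (mono a 2 - 1) ^ 2 * (mono (-b) (-2) * (mono b 2 - 1) ^ 2) *
      (mono 0 (-1) * (mono 0 1 - 1) ^ 2) =
      (mono (-a) (-2) * mono (-b) (-2) * mono 0 (-1)) *
        ((mono a 2 - 1) * (mono b 2 - 1) * (mono 0 1 - 1)) ^ 2 := by ring
  have rhs : mono (a + b) (-5) *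
      ((mono 0 1 - 1) * (mono (-b) 0 * (mono b 2 - 1)) * (mono (-a) 0 * (mono a 2 - 1))) ^ 2 =
      (mono (a + b) (-5) * ((mono (-b) 0 * mono (-a) 0) * (mono (-b) 0 * mono (-a) 0))) *
        ((mono a 2 - 1) * (mono b 2 - 1) * (mono 0 1 - 1)) ^ 2 := by ring
  rw [lhs, rhs, mono_mul, mono_mul, mono_mul, mono_mul, mono_mul]
  ring_nf

/-- In `ℂ[M^{±1}, L^{±1}]` one has
`(L²M^{2rs} + L^{-2}M^{-2rs} - 2)(L²M^{2pqs²} + L^{-2}M^{-2pqs²} - 2)(L + L^{-1} - 2)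
  = M^{2(r+pqs)s} L^{-5} ((L-1)(L² - M^{-2pqs²})(L² - M^{-2rs}))²`. -/
theorem laurent_identity_odd_cable (p q r s : ℤ) :
    (mono (2 * r * s) 2 + mono (-(2 * r * s)) (-2) - 2) *
      (mono (2 * p * q * s ^ 2) 2 + mono (-(2 * p * q * s ^ 2)) (-2) - 2) *
      (mono 0 1 + mono 0 (-1) - 2) =
    mono (2 * (r + p * q * s) * s) (-5) *
      ((mono 0 1 - 1) * (mono 0 2 - mono (-(2 * p * q * s ^ 2)) 0) *
        (mono 0 2 - mono (-(2 * r * s)) 0)) ^ 2 := by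
  have h := key (2 * r * s) (2 * p * q * s ^ 2)
  have e : 2 * (r + p * q * s) * s = 2 * r * s + 2 * p * q * s ^ 2 := by ring
  rw [e]
  exact h
end
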